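/- arXiv:2509.08917 — 2 statements merged into one kernel-verified Lean document; each statement's English description precedes it below -/
import Mathlib

section
/- For $n \geq 2$, the distinct adjacency eigenvalues of the phase-rotation graph $G_{pr}(\mathbb{F}_2^n)$ when $n$ is even are $2i - n - 1$ for $i \in \{1, 3, \ldots, n-1, n+1\}$ (odd $i$), and when $n$ is odd they are $2i - n - 1$ for $i \in \{0, 2, \ldots, n-1, n+1\}$ (even $i$). -/
open Finset Matrix SimpleGraph
open scoped Classical

noncomputable def sgn : ZMod 2 → ℝ := fun a => if a = 0 then 1 else -1
lemma zmod2_cases (a : ZMod 2) : a = 0 ∨ a = 1 := by fin_cases a; exacts [Or.inl rfl, Or.inr rfl]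
lemma sgn_zero : sgn 0 = 1 := by simp [sgn]
lemma sgn_add (a b : ZMod 2) : sgn (a + b) = sgn a * sgn b := by
  rcases zmod2_cases a with rfl | rfl <;> rcases zmod2_cases b with rfl | rfl <;>
    norm_num [sgn, show ((1:ZMod 2)+1) = 0 from rfl, show (2:ZMod 2) = 0 from rfl] <;>
    exact rfl
lemma sgn_sum {ι : Type*} (s : Finset ι) (f : ι → ZMod 2) :
    sgn (∑ i ∈ s, f i) = ∏ i ∈ s, sgn (f i) := by
  induction s using Finset.cons_induction with
  | empty => simp [sgn_zero]
  | cons i s hi ih => rw [Finset.sum_cons, Finset.prod_cons, sgn_add, ih]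

noncomputable def chi {n : ℕ} (r x : Fin n → ZMod 2) : ℝ := ∏ i, sgn (r i * x i)
lemma chi_add {n : ℕ} (r x y : Fin n → ZMod 2) :
    chi r (x + y) = chi r x * chi r y := by
  rw [chi, chi, chi, ← Finset.prod_mul_distrib]
  exact Finset.prod_congr rfl fun i _ => by rw [Pi.add_apply, mul_add, sgn_add]
lemma chi_zero {n : ℕ} (r : Fin n → ZMod 2) : chi r 0 = 1 := by simp [chi, sgn_zero]
lemma chi_single {n : ℕ} (r : Fin n → ZMod 2) (i : Fin n) :
    chi r (Pi.single i 1) = sgn (r i) := by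
  rw [chi, Finset.prod_eq_single i]
  · simp
  · intro j _ hj; simp [Pi.single_eq_of_ne hj, sgn_zero]
  · simp
lemma chi_ones {n : ℕ} (r : Fin n → ZMod 2) :
    chi r (fun _ => 1) = sgn (∑ i, r i) := by
  rw [chi, sgn_sum]; simp

lemma sum_chi {n : ℕ} (z : Fin n → ZMod 2) :
    ∑ r : Fin n → ZMod 2, chi r z = if z = 0 then (2 : ℝ)^n else 0 := by
  have key : ∑ r : Fin n → ZMod 2, chi r z = ∏ i, (∑ a : ZMod 2, sgn (a * z i)) := by
    rw [Finset.prod_univ_sum]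
    rw [Fintype.sum_equiv (Equiv.refl _)]
    · rfl
    · intro r; rfl
  rw [key]
  by_cases hz : z = 0
  · subst hz
    simp only [if_pos rfl, Pi.zero_apply, mul_zero, sgn_zero]
    simp
  · have hj : ∃ j, z j ≠ 0 := by
      by_contra h; push_neg at h; exact hz (funext fun j => h j)
    obtain ⟨j, hj⟩ := hj
    rw [if_neg hz]
    apply Finset.prod_eq_zero (Finset.mem_univ j)
    have hz1 : z j = 1 := (zmod2_cases (z j)).resolve_left hj
    rw [hz1]
    rw [show (Finset.univ : Finset (ZMod 2)) = {0, 1} by decide]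
    simp [sgn]

/-- The phase-rotation distance graph on `𝔽_qⁿ`: `x ~ y` iff `y - x = c • v` for
some nonzero scalar `c` and `v` a standard basis vector or the all-ones vector. -/
def phaseRotationGraph (F : Type*) [Field F] (n : ℕ) (hn : 1 ≤ n) :
    SimpleGraph (Fin n → F) where
  Adj x y := ∃ c : F, c ≠ 0 ∧
    ((∃ i : Fin n, y - x = c • (Pi.single i 1 : Fin n → F)) ∨ y - x = c • (fun _ => (1 : F)))
  symm := by
    constructor
    rintro x y ⟨c, hc, h⟩
    refine ⟨-c, neg_ne_zero.mpr hc, ?_⟩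
    rcases h with ⟨i, hi⟩ | h
    · exact Or.inl ⟨i, by rw [neg_smul, ← hi, neg_sub]⟩
    · exact Or.inr (by rw [neg_smul, ← h, neg_sub])
  loopless := by
    constructor
    rintro x ⟨c, hc, h⟩
    rcases h with ⟨i, hi⟩ | h
    · rw [sub_self] at hi
      have h2 := congrFun hi.symm i
      rw [Pi.smul_apply, Pi.single_eq_same, smul_eq_mul, mul_one] at h2
      exact hc h2
    · rw [sub_self] at h
      have h2 := congrFun h.symm ⟨0, hn⟩
      rw [Pi.smul_apply, smul_eq_mul, mul_one] at h2
      exact hc h2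

lemma adj_iff {n : ℕ} (hn : 1 ≤ n) (x y : Fin n → ZMod 2) :
    (phaseRotationGraph (ZMod 2) n hn).Adj x y ↔
      ((∃ i, y = x + Pi.single i 1) ∨ y = x + fun _ => (1 : ZMod 2)) := by
  constructor
  · rintro ⟨c, hc, h⟩
    have hc1 : c = 1 := (zmod2_cases c).resolve_left hc
    subst hc1
    rcases h with ⟨i, hi⟩ | h
    · exact Or.inl ⟨i, by rw [← sub_eq_iff_eq_add', hi, one_smul]⟩
    · exact Or.inr (by rw [← sub_eq_iff_eq_add', h, one_smul])
  · rintro (⟨i, hi⟩ | h)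
    · exact ⟨1, one_ne_zero, Or.inl ⟨i, by rw [one_smul]; rw [← sub_eq_iff_eq_add'] at hi; exact hi⟩⟩
    · exact ⟨1, one_ne_zero, Or.inr (by rw [one_smul]; rw [← sub_eq_iff_eq_add'] at h; exact h)⟩

lemma ones_ne_single {n : ℕ} (hn : 2 ≤ n) (i : Fin n) :
    (Pi.single i 1 : Fin n → ZMod 2) ≠ fun _ => 1 := by
  have : Nontrivial (Fin n) := Fin.nontrivial_iff_two_le.mpr hn
  obtain ⟨j, hj⟩ := exists_ne i
  intro h
  have := congrFun h j
  rw [Pi.single_eq_of_ne hj] at this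
  exact one_ne_zero this.symm

lemma neighbor_eq {n : ℕ} (hn : 2 ≤ n) (x : Fin n → ZMod 2) :
    (phaseRotationGraph (ZMod 2) n (by linarith)).neighborFinset x =
      (Finset.univ.image fun i : Fin n => x + Pi.single i 1) ∪ {x + fun _ => 1} := by
  ext y
  simp only [mem_neighborFinset, adj_iff, Finset.mem_union, Finset.mem_image,
    Finset.mem_singleton, Finset.mem_univ, true_and]
  constructor
  · rintro (⟨i, hi⟩ | h)
    · exact Or.inl ⟨i, hi.symm⟩
    · exact Or.inr h
  · rintro (⟨i, hi⟩ | h)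
    · exact Or.inl ⟨i, hi.symm⟩
    · exact Or.inr h

noncomputable def lam {n : ℕ} (r : Fin n → ZMod 2) : ℝ :=
  (∑ i, sgn (r i)) + sgn (∑ i, r i)

lemma mulVec_chi {n : ℕ} (hn : 2 ≤ n) (r : Fin n → ZMod 2) :
    ((phaseRotationGraph (ZMod 2) n (by linarith)).adjMatrix ℝ).mulVec (chi r) = lam r • chi r := by
  funext x
  rw [adjMatrix_mulVec_apply, neighbor_eq hn]
  have hdisj : Disjoint (Finset.univ.image fun i : Fin n => x + Pi.single i 1)
      ({x + fun _ => (1 : ZMod 2)} : Finset _) := by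
    rw [Finset.disjoint_singleton_right]
    simp only [Finset.mem_image, Finset.mem_univ, true_and, not_exists]
    intro i h
    exact ones_ne_single hn i (by rwa [add_right_inj] at h)
  rw [Finset.sum_union hdisj, Finset.sum_singleton,
    Finset.sum_image (fun i _ j _ h => by
      have h2 := congrFun h i
      simp only [Pi.add_apply, add_right_inj] at h2
      by_contra hij
      rw [Pi.single_eq_same, Pi.single_eq_of_ne hij] at h2
      exact one_ne_zero h2)]
  simp only [chi_add, chi_single, chi_ones]
  rw [← Finset.mul_sum, Pi.smul_apply, smul_eq_mul, lam]
  ring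

lemma chi_ne_zero {n : ℕ} (r : Fin n → ZMod 2) : chi r ≠ 0 := by
  intro h
  have := congrFun h 0
  rw [chi_zero] at this
  exact one_ne_zero this

lemma eigen_iff {n : ℕ} (hn : 2 ≤ n) (μ : ℝ) :
    (∃ v : (Fin n → ZMod 2) → ℝ, v ≠ 0 ∧
        ((phaseRotationGraph (ZMod 2) n (by linarith)).adjMatrix ℝ).mulVec v = μ • v) ↔
      ∃ r : Fin n → ZMod 2, μ = lam r := by
  set A := ((phaseRotationGraph (ZMod 2) n (by linarith : 1 ≤ n)).adjMatrix ℝ) with hA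
  constructor
  · rintro ⟨v, hv, hAv⟩
    by_contra h
    push_neg at h
    have hc0 : ∀ r : Fin n → ZMod 2, chi r ⬝ᵥ v = 0 := by
      intro r
      have h1 : chi r ⬝ᵥ (A *ᵥ v) = lam r * (chi r ⬝ᵥ v) := by
        rw [Matrix.dotProduct_mulVec, ← Matrix.mulVec_transpose]
        rw [hA, SimpleGraph.transpose_adjMatrix, ← hA, mulVec_chi hn r,
          smul_dotProduct]
        simp
      have h2 : chi r ⬝ᵥ (A *ᵥ v) = μ * (chi r ⬝ᵥ v) := by
        rw [hAv, dotProduct_smul]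
        simp
      have h3 : (lam r - μ) * (chi r ⬝ᵥ v) = 0 := by
        rw [sub_mul, ← h1, ← h2, sub_self]
      rcases mul_eq_zero.mp h3 with h4 | h4
      · exact absurd (by linarith [sub_eq_zero.mp h4] : μ = lam r) (h r)
      · exact h4
    apply hv
    funext x
    have key : (2:ℝ)^n * v x = ∑ r : Fin n → ZMod 2, chi r x * (chi r ⬝ᵥ v) := by
      have : ∀ r : Fin n → ZMod 2, chi r x * (chi r ⬝ᵥ v)
          = ∑ y : Fin n → ZMod 2, chi r (x + y) * v y := by
        intro r
        rw [dotProduct, Finset.mul_sum]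
        exact Finset.sum_congr rfl fun y _ => by rw [chi_add]; ring
      rw [Finset.sum_congr rfl fun r _ => this r, Finset.sum_comm]
      have hxy : ∀ y : Fin n → ZMod 2, x + y = 0 ↔ y = x := by
        intro y
        constructor
        · intro h
          funext i
          have h2 := congrFun h i
          have : ∀ a b : ZMod 2, a + b = 0 → b = a := by decide
          exact this _ _ h2
        · rintro rfl
          funext i
          have : ∀ a : ZMod 2, a + a = 0 := by decide
          exact this _
      have : ∀ y : Fin n → ZMod 2, (∑ r : Fin n → ZMod 2, chi r (x + y) * v y)
          = (if y = x then (2:ℝ)^n else 0) * v y := by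
        intro y
        rw [← Finset.sum_mul]
        have := sum_chi (x + y)
        rw [Finset.sum_congr rfl fun r _ => rfl] at this
        rw [show (∑ r : Fin n → ZMod 2, chi r (x+y)) = if x + y = 0 then (2:ℝ)^n else 0 from this]
        congr 1
        simp [hxy y]
      rw [Finset.sum_congr rfl fun y _ => this y]
      simp
    rw [Finset.sum_congr rfl fun r _ => by rw [hc0 r, mul_zero]] at key
    simp only [Finset.sum_const_zero] at key
    have h2n : (2:ℝ)^n ≠ 0 := by positivity
    exact (mul_eq_zero.mp key).resolve_left h2n
  · rintro ⟨r, rfl⟩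
    exact ⟨chi r, chi_ne_zero r, mulVec_chi hn r⟩

lemma sum_sgn {n : ℕ} (r : Fin n → ZMod 2) :
    ∑ i, sgn (r i) = 2 * (((univ : Finset (Fin n)).filter fun i => r i = 0).card : ℝ) - n := by
  have h1 : ∀ i, sgn (r i) = if r i = 0 then (1:ℝ) else -1 := fun i => rfl
  rw [Finset.sum_congr rfl fun i _ => h1 i, Finset.sum_ite, Finset.sum_const, Finset.sum_const]
  have h2 := Finset.card_filter_add_card_filter_not
    (s := (univ : Finset (Fin n))) (p := fun i => r i = 0)
  set z := ((univ : Finset (Fin n)).filter fun i => r i = 0).card with hz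
  have h3 : ((univ : Finset (Fin n)).filter fun i => ¬ r i = 0).card = n - z := by
    simp only [Finset.card_univ, Fintype.card_fin] at h2
    omega
  rw [h3]
  have hzn : z ≤ n := by
    simp only [Finset.card_univ, Fintype.card_fin] at h2
    omega
  rw [nsmul_eq_mul, nsmul_eq_mul, Nat.cast_sub hzn]
  ring

lemma sum_r {n : ℕ} (r : Fin n → ZMod 2) :
    (∑ i, r i) = ((n - ((univ : Finset (Fin n)).filter fun i => r i = 0).card : ℕ) : ZMod 2) := by
  rw [← Finset.sum_filter_ne_zero]
  have h1 : ∀ i ∈ (univ : Finset (Fin n)).filter fun i => r i ≠ 0, r i = 1 :=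
    fun i hi => (zmod2_cases (r i)).resolve_left (Finset.mem_filter.mp hi).2
  rw [Finset.sum_congr rfl h1, Finset.sum_const, nsmul_eq_mul, mul_one]
  congr 1
  have h2 := Finset.card_filter_add_card_filter_not
    (s := (univ : Finset (Fin n))) (p := fun i => r i = 0)
  simp only [Finset.card_univ, Fintype.card_fin] at h2
  have : ((univ : Finset (Fin n)).filter fun i => r i ≠ 0)
      = (univ : Finset (Fin n)).filter fun i => ¬ r i = 0 := rfl
  rw [this]
  omega

lemma sgn_natCast (m : ℕ) : sgn (m : ZMod 2) = if m % 2 = 0 then 1 else -1 := by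
  rw [sgn]
  congr 1
  rw [eq_iff_iff, ZMod.natCast_eq_zero_iff]
  omega

lemma lam_char {n : ℕ} (μ : ℝ) :
    (∃ r : Fin n → ZMod 2, μ = lam r) ↔
      (∃ z : ℕ, z ≤ n ∧ μ = 2 * z - n + (if (n - z) % 2 = 0 then 1 else -1)) := by
  constructor
  · rintro ⟨r, rfl⟩
    refine ⟨((univ : Finset (Fin n)).filter fun i => r i = 0).card, ?_, ?_⟩
    · have := Finset.card_filter_le (univ : Finset (Fin n)) (fun i => r i = 0)
      simpa using this
    · rw [lam, sum_sgn, sum_r, sgn_natCast]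
  · rintro ⟨z, hz, rfl⟩
    refine ⟨fun j => if (j : ℕ) < z then 0 else 1, ?_⟩
    set r : Fin n → ZMod 2 := fun j => if (j : ℕ) < z then 0 else 1 with hr
    have hfilter : ((univ : Finset (Fin n)).filter fun i => r i = 0)
        = (Finset.range z).attachFin (fun m hm => lt_of_lt_of_le (Finset.mem_range.mp hm) hz) := by
      ext j
      simp only [Finset.mem_filter, Finset.mem_univ, true_and, Finset.mem_attachFin,
        Finset.mem_range, hr]
      constructor
      · intro h
        by_contra hc
        rw [if_neg hc] at h
        exact one_ne_zero h
      · intro h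
        rw [if_pos h]
    have hcard : ((univ : Finset (Fin n)).filter fun i => r i = 0).card = z := by
      rw [hfilter, Finset.card_attachFin, Finset.card_range]
    rw [lam, sum_sgn, sum_r, sgn_natCast, hcard]

lemma parity_bridge {n : ℕ} (hn : 2 ≤ n) (μ : ℝ) :
    (∃ z : ℕ, z ≤ n ∧ μ = 2 * z - n + (if (n - z) % 2 = 0 then 1 else -1)) ↔
      (∃ i : ℕ, i % 2 = (n + 1) % 2 ∧ (i ≤ n - 1 ∨ i = n + 1) ∧
        μ = 2 * i - (n : ℝ) - 1) := by
  constructor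
  · rintro ⟨z, hz, rfl⟩
    by_cases hp : (n - z) % 2 = 0
    · refine ⟨z + 1, by omega, by omega, ?_⟩
      rw [if_pos hp]
      push_cast
      ring
    · refine ⟨z, by omega, Or.inl (by omega), ?_⟩
      rw [if_neg hp]
      ring
  · rintro ⟨i, hp, hr, rfl⟩
    rcases hr with hr | hr
    · refine ⟨i, by omega, ?_⟩
      rw [if_neg (by omega)]
      ring
    · refine ⟨n, le_refl n, ?_⟩
      rw [if_pos (by omega)]
      subst hr
      push_cast
      ring_nf


open scoped Classical in
/-- For n ≥ 2, the distinct adjacency eigenvalues of the phase-rotation graph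
over 𝔽₂ are 2i - n - 1 for odd i ∈ {1,3,…,n-1,n+1} when n is even, and for
even i ∈ {0,2,…,n-1,n+1} when n is odd. -/
theorem phaseRotationGraph_eigenvalues_q2 {n : ℕ} (hn : 2 ≤ n) :
    (n % 2 = 0 →
      {μ : ℝ | ∃ v : (Fin n → ZMod 2) → ℝ, v ≠ 0 ∧
          ((phaseRotationGraph (ZMod 2) n (by omega)).adjMatrix ℝ).mulVec v = μ • v} =
      {μ : ℝ | ∃ i : ℕ, i % 2 = 1 ∧ (i ≤ n - 1 ∨ i = n + 1) ∧
          μ = 2 * i - (n : ℝ) - 1}) ∧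
    (n % 2 = 1 →
      {μ : ℝ | ∃ v : (Fin n → ZMod 2) → ℝ, v ≠ 0 ∧
          ((phaseRotationGraph (ZMod 2) n (by omega)).adjMatrix ℝ).mulVec v = μ • v} =
      {μ : ℝ | ∃ i : ℕ, i % 2 = 0 ∧ (i ≤ n - 1 ∨ i = n + 1) ∧
          μ = 2 * i - (n : ℝ) - 1}) := by
  constructor
  · intro hpar
    ext μ
    simp only [Set.mem_setOf_eq]
    rw [eigen_iff hn, lam_char, parity_bridge hn, show (n + 1) % 2 = 1 by omega]
  · intro hpar
    ext μ
    simp only [Set.mem_setOf_eq]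
    rw [eigen_iff hn, lam_char, parity_bridge hn, show (n + 1) % 2 = 0 by omega]
end

section
/- Let $n \geq 3$, $q \geq 3$ be integers and $m = \lceil (n-1)/q \rceil$. Then $2qn - n - 2qmn - q^2 m + q^2 m^2 \leq n - 2mn - m + m^2$. -/
/-!
The difference of the two sides factors as `(q - 1) (m - 1) ((q + 1) m - 2 n)`. The middle factor
vanishes for `m = 1`; for `m ≥ 2` the ceiling bound `q (m - 1) ≤ n - 2` together with
`(q - 1) (m - 2) ≥ 0` gives `(q + 1) m ≤ 2 n`.
-/

theorem Int.mul_ceil_div_sub_one_lt {K : Type*} [Field K] [LinearOrder K] [IsStrictOrderedRing K]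
    [FloorRing K] {a b : ℤ} (hb : 0 < b) : b * (⌈(a : K) / b⌉ - 1) < a := by
  have hbK : (0 : K) < b := by exact_mod_cast hb
  have h : ((⌈(a : K) / b⌉ - 1 : ℤ) : K) < a / b := by
    push_cast
    linarith [Int.ceil_lt_add_one ((a : K) / b)]
  rw [lt_div_iff₀ hbK] at h
  exact_mod_cast (mul_comm (b : K) _ ▸ h)

theorem succ_mul_le_two_mul_of_mul_sub_one_lt {n q m : ℤ} (hq : 1 ≤ q) (hm : 2 ≤ m)
    (h : q * (m - 1) < n - 1) : (q + 1) * m ≤ 2 * n := by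
  nlinarith [mul_nonneg (sub_nonneg.mpr hq) (sub_nonneg.mpr hm)]

theorem key_inequality_of_mul_sub_one_lt {n q m : ℤ} (hq : 1 ≤ q) (hm : 1 ≤ m)
    (h : q * (m - 1) < n - 1) :
    2 * q * n - n - 2 * q * m * n - q ^ 2 * m + q ^ 2 * m ^ 2
      ≤ n - 2 * m * n - m + m ^ 2 := by
  suffices 0 ≤ (q - 1) * (m - 1) * (2 * n - (q + 1) * m) by linarith
  rcases hm.eq_or_lt with rfl | hm
  · simp
  exact mul_nonneg (mul_nonneg (sub_nonneg.mpr hq) (sub_nonneg.mpr hm.le))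
    (sub_nonneg.mpr (succ_mul_le_two_mul_of_mul_sub_one_lt hq hm h))

/-- Let n ≥ 3, q ≥ 3 be integers and m = ⌈(n-1)/q⌉. Then
2qn - n - 2qmn - q²m + q²m² ≤ n - 2mn - m + m². -/
theorem key_inequality_d4 (n q m : ℤ) (hn : 3 ≤ n) (hq : 3 ≤ q)
    (hm : m = ⌈((n : ℚ) - 1) / (q : ℚ)⌉) :
    2 * q * n - n - 2 * q * m * n - q ^ 2 * m + q ^ 2 * m ^ 2
      ≤ n - 2 * m * n - m + m ^ 2 := by
  have hq0 : (0 : ℤ) < q := by omega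
  have hm' : m = ⌈((n - 1 : ℤ) : ℚ) / q⌉ := by push_cast; exact hm
  have hm_pos : 1 ≤ m := by
    rw [hm']
    exact Int.one_le_ceil_iff.mpr (div_pos (by exact_mod_cast (by omega : (0 : ℤ) < n - 1))
      (by exact_mod_cast hq0))
  have hceil : q * (m - 1) < n - 1 := hm' ▸ Int.mul_ceil_div_sub_one_lt hq0
  exact key_inequality_of_mul_sub_one_lt (by omega) hm_pos hceil
end
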